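/- The logit-level KL gradient vanishes identically (all components zero) if and only if p = q, for strictly positive distributions p, q on a finite set. -/
import Mathlib


open Finset

/-- the logit-level KL gradient vanishes identically iff p = q. -/
theorem kl_gradient_zero_iff_eq {V : Type*} [Fintype V] [Nonempty V]
    (p q : V → ℝ)
    (hp : ∀ i, 0 < p i) (hpsum : ∑ i, p i = 1)
    (hq : ∀ i, 0 < q i) (hqsum : ∑ i, q i = 1) :
    (∀ j, p j * (Real.log (p j) - Real.log (q j)
        - ∑ i, p i * (Real.log (p i) - Real.log (q i))) = 0)
    ↔ p = q := by
  constructor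
  · intro h
    set D := ∑ i, p i * (Real.log (p i) - Real.log (q i)) with hD
    have hlog : ∀ j, Real.log (p j) - Real.log (q j) = D := by
      intro j
      have := h j
      have hpj := (hp j).ne'
      have : Real.log (p j) - Real.log (q j) - D = 0 := by
        rcases mul_eq_zero.mp this with h' | h'
        · exact absurd h' hpj
        · exact h'
      linarith
    have hpq : ∀ j, p j = q j * Real.exp D := by
      intro j
      have : Real.log (p j) = Real.log (q j) + D := by linarith [hlog j]
      have := congrArg Real.exp this
      rw [Real.exp_log (hp j), Real.exp_add, Real.exp_log (hq j)] at this
      exact this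
    have hsum : (1 : ℝ) = Real.exp D := by
      calc (1:ℝ) = ∑ i, p i := hpsum.symm
      _ = ∑ i, q i * Real.exp D := by exact Finset.sum_congr rfl fun i _ => hpq i
      _ = (∑ i, q i) * Real.exp D := by rw [Finset.sum_mul]
      _ = Real.exp D := by rw [hqsum, one_mul]
    funext j
    rw [hpq j, ← hsum, mul_one]
  · intro h j
    subst h
    simp
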